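/- Let R be an integral domain, n a natural number, and ξ ∈ R an element with ξ^n = 1 and ξ^j ≠ 1 for all 0 < j < n. Then for all k with 0 < k < n, the Gaussian binomial coefficient evaluated at ξ vanishes: binom(n,k)_ξ = 0 in R. -/

import Mathlib

/-!
Clearing denominators, `binom(n,k)_q ⬝ [n-k]!_q ⬝ [k]!_q = [n]!_q` holds in `ℤ[q]`, so it
may be evaluated at `ξ`. Since `[m]_ξ ⬝ (ξ - 1) = ξ^m - 1`, the factor `[n]_ξ` of `[n]!_ξ`
vanishes (as `ξ ≠ 1` and `R` is a domain), while every factor `[m]_ξ` with `0 < m < n` of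
`[n-k]!_ξ ⬝ [k]!_ξ` does not.
-/

/-- The image of the variable `q` in the fraction field of `ℤ[q]`. -/
noncomputable def qq : FractionRing (Polynomial ℤ) :=
  algebraMap (Polynomial ℤ) (FractionRing (Polynomial ℤ)) Polynomial.X

/-- The q-bracket `[n]_q = 1 + q + ... + q^(n-1)`. -/
noncomputable def qBracket (n : ℕ) : FractionRing (Polynomial ℤ) :=
  ∑ i ∈ Finset.range n, qq ^ i

/-- The q-factorial `[n]!_q = [1]_q ⬝ [2]_q ⬝ ... ⬝ [n]_q`. -/
noncomputable def qFactorial (n : ℕ) : FractionRing (Polynomial ℤ) :=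
  ∏ i ∈ Finset.range n, qBracket (i + 1)

open Polynomial Finset

noncomputable def qFactorialPoly (m : ℕ) : ℤ[X] :=
  ∏ i ∈ range m, ∑ j ∈ range (i + 1), X ^ j

theorem algebraMap_qFactorialPoly (m : ℕ) :
    algebraMap ℤ[X] (FractionRing ℤ[X]) (qFactorialPoly m) = qFactorial m := by
  simp [qFactorialPoly, qFactorial, qBracket, qq]

theorem monic_qFactorialPoly (m : ℕ) : (qFactorialPoly m).Monic :=
  monic_prod_of_monic _ _ fun i _ => monic_geom_sum_X i.succ_ne_zero

theorem qFactorial_ne_zero (m : ℕ) : qFactorial m ≠ 0 := by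
  rw [← algebraMap_qFactorialPoly]
  exact (map_ne_zero_iff _ (IsFractionRing.injective _ _)).mpr (monic_qFactorialPoly m).ne_zero

theorem mul_qFactorialPoly_eq {B : ℕ → ℕ → ℤ[X]}
    (hB : ∀ n k : ℕ, k ≤ n →
      algebraMap ℤ[X] (FractionRing ℤ[X]) (B n k) =
        qFactorial n / (qFactorial (n - k) * qFactorial k))
    {n k : ℕ} (hk : k ≤ n) :
    B n k * (qFactorialPoly (n - k) * qFactorialPoly k) = qFactorialPoly n := by
  apply IsFractionRing.injective ℤ[X] (FractionRing ℤ[X])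
  simp only [map_mul, algebraMap_qFactorialPoly, hB n k hk]
  field_simp [qFactorial_ne_zero]

section Eval

variable {R : Type*} [CommRing R] {ξ : R}

theorem geom_sum_ne_zero_of_pow_ne_one {m : ℕ} (h : ξ ^ m ≠ 1) :
    ∑ i ∈ range m, ξ ^ i ≠ 0 := by
  intro h0
  apply h
  rw [← sub_eq_zero, ← geom_sum_mul, h0, zero_mul]

theorem geom_sum_eq_zero_of_pow_eq_one [NoZeroDivisors R] {m : ℕ} (hξ : ξ ≠ 1) (h : ξ ^ m = 1) :
    ∑ i ∈ range m, ξ ^ i = 0 := by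
  have := geom_sum_mul ξ m
  rw [h, sub_self] at this
  exact (mul_eq_zero.mp this).resolve_right (sub_ne_zero.mpr hξ)

theorem aeval_qFactorialPoly_eq_zero [NoZeroDivisors R] {n : ℕ} (hn : 0 < n) (hξ : ξ ≠ 1)
    (h : ξ ^ n = 1) : aeval ξ (qFactorialPoly n) = 0 := by
  simp only [qFactorialPoly, map_prod, map_sum, map_pow, aeval_X]
  refine prod_eq_zero (i := n - 1) (mem_range.mpr (by omega)) ?_
  rw [Nat.sub_add_cancel hn]
  exact geom_sum_eq_zero_of_pow_eq_one hξ h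

theorem aeval_qFactorialPoly_ne_zero [Nontrivial R] [NoZeroDivisors R] {m : ℕ}
    (h : ∀ j, 0 < j → j ≤ m → ξ ^ j ≠ 1) : aeval ξ (qFactorialPoly m) ≠ 0 := by
  simp only [qFactorialPoly, map_prod, map_sum, map_pow, aeval_X]
  refine prod_ne_zero_iff.mpr fun i hi => geom_sum_ne_zero_of_pow_ne_one ?_
  exact h (i + 1) i.succ_pos (mem_range.mp hi)

end Eval

/-- Let `R` be an integral domain, `n` a natural number and `ξ ∈ R` an element with
`ξ^n = 1` and `ξ^j ≠ 1` for all `0 < j < n`.  Then for all `0 < k < n` the Gaussian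
binomial coefficient evaluated at `ξ` vanishes: `binom(n,k)_ξ = 0` in `R`. -/
theorem qBinom_eval_primitiveRoot_domain (B : ℕ → ℕ → Polynomial ℤ)
    (hB : ∀ n k : ℕ, k ≤ n →
      algebraMap (Polynomial ℤ) (FractionRing (Polynomial ℤ)) (B n k) =
        qFactorial n / (qFactorial (n - k) * qFactorial k))
    (R : Type*) [CommRing R] [IsDomain R]
    (n : ℕ) (ξ : R) (hξ1 : ξ ^ n = 1) (hξ2 : ∀ j : ℕ, 0 < j → j < n → ξ ^ j ≠ 1)
    (k : ℕ) (hk0 : 0 < k) (hkn : k < n) :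
    Polynomial.aeval ξ (B n k) = 0 := by
  have hkey := congrArg (aeval ξ) (mul_qFactorialPoly_eq hB hkn.le)
  have hξ : ξ ≠ 1 := by simpa using hξ2 1 one_pos (by omega)
  rw [map_mul, map_mul, aeval_qFactorialPoly_eq_zero (by omega) hξ hξ1] at hkey
  have hden : aeval ξ (qFactorialPoly (n - k)) * aeval ξ (qFactorialPoly k) ≠ 0 :=
    mul_ne_zero (aeval_qFactorialPoly_ne_zero fun j hj hjk => hξ2 j hj (by omega))
      (aeval_qFactorialPoly_ne_zero fun j hj hjk => hξ2 j hj (by omega))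
  exact (mul_eq_zero.mp hkey).resolve_right hden
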